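/- Let R be a commutative ring, let I be an ideal of R, and let x, y ∈ I be nonzerodivisors on R. Then x·(y : I) = y·(x : I). -/

import Mathlib

/-! For `r ∈ (y : I)`, the element `x ∈ I` gives `r * x = y * s` for some `s`, and cancelling the
nonzerodivisor `y` from `y * (s * t) = (r * t) * x ∈ y * x * R` shows `s ∈ (x : I)`. Hence
`x * r = y * s ∈ y * (x : I)`, and the reverse inclusion is symmetric. -/

namespace Ideal

variable {R : Type*} [CommRing R] {I : Ideal R} {x y r s : R}

theorem mem_colon_of_mul_eq_mul (hy : y ∈ nonZeroDivisors R)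
    (hr : r ∈ (span {y}).colon I) (hrs : r * x = y * s) : s ∈ (span {x}).colon I := by
  refine Submodule.mem_colon.mpr fun t ht => ?_
  obtain ⟨u, hu⟩ := mem_span_singleton'.mp (Submodule.mem_colon.mp hr t ht)
  rw [smul_eq_mul] at hu
  have hst : y * (s * t) = y * (u * x) :=
    calc y * (s * t) = r * x * t := by rw [← mul_assoc, hrs]
      _ = u * y * x := by rw [hu]; ring
      _ = y * (u * x) := by ring
  exact mem_span_singleton'.mpr ⟨u, ((mul_cancel_left_mem_nonZeroDivisors hy).mp hst).symm⟩

theorem span_singleton_mul_colon_le (hxI : x ∈ I) (hy : y ∈ nonZeroDivisors R) :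
    span {x} * (span {y}).colon I ≤ span {y} * (span {x}).colon I := by
  refine span_singleton_mul_le_iff.mpr fun r hr => ?_
  obtain ⟨s, hs⟩ := mem_span_singleton'.mp (Submodule.mem_colon.mp hr x hxI)
  rw [smul_eq_mul, mul_comm] at hs
  rw [mul_comm x r, ← hs]
  exact mul_mem_mul (mem_span_singleton_self y) (mem_colon_of_mul_eq_mul hy hr hs.symm)

end Ideal

theorem colon_swap {R : Type*} [CommRing R] (I : Ideal R) (x y : R)
    (hxI : x ∈ I) (hyI : y ∈ I)
    (hx : x ∈ nonZeroDivisors R) (hy : y ∈ nonZeroDivisors R) :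
    Ideal.span {x} * ((Ideal.span {y}).colon I) =
      Ideal.span {y} * ((Ideal.span {x}).colon I) :=
  le_antisymm (Ideal.span_singleton_mul_colon_le hxI hy) (Ideal.span_singleton_mul_colon_le hyI hx)
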